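/- arXiv:1312.2283 — 9 statements merged into one kernel-verified Lean document; each statement's English description precedes it below -/
import Mathlib

section
/- Let p and q be real polynomials, each of degree at least one, and let α ≥ 0. Then the number of real zeros (counted with multiplicity) of f(x) = q(x)·p'(x) + α·q'(x)·p(x) is at least Z_R(p) + Z_R(q) − 1, where Z_R denotes the number of real zeros counted with multiplicity. -/
/-!
At a point `x` where `p` and `q` vanish to orders `m` and `n`, both `q p'` and `q' p` are divisible
by `(X - x) ^ (m + n - 1)`, hence so is `f`. For `α > 0`, between two consecutive distinct real
roots of `p q` the function `p |q| ^ α` vanishes at both ends and its derivative is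
`|q| ^ (α - 2) q f`, so Rolle's theorem gives a root of `f` strictly in between. Counting as in the
proof that `p'` has at least `Z(p) - 1` real roots yields `Z(p q) ≤ Z(f) + 1`. For `α = 0`,
`f = q p'` and the bound is that classical one.
-/

open Polynomial Finset

open scoped Classical in
/-- Number of non-real complex zeros of a real polynomial, counted with multiplicity. -/
noncomputable def ZC (p : Polynomial ℝ) : ℕ :=
  (((p.map (algebraMap ℝ ℂ)).roots).filter (fun z => z.im ≠ 0)).card

/-- Number of real zeros of a real polynomial, counted with multiplicity. -/
noncomputable def ZR (p : Polynomial ℝ) : ℕ := p.roots.card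

namespace Polynomial

variable {R : Type*}

theorem card_roots_le_card_roots_add_one_of_interleaved
    [CommRing R] [IsDomain R] [LinearOrder R] {P f : R[X]} (hf : f ≠ 0)
    (hmult : ∀ x ∈ P.roots, P.rootMultiplicity x ≤ f.rootMultiplicity x + 1)
    (hgap : ∀ x ∈ P.roots, ∀ y ∈ P.roots, x < y → (∀ z ∈ P.roots, z ∉ Set.Ioo x y) →
      ∃ z ∈ Set.Ioo x y, f.IsRoot z) :
    P.roots.card ≤ f.roots.card + 1 := by
  classical
  set S := P.roots.toFinset
  set T := f.roots.toFinset
  have hinterleave : S.card ≤ (T \ S).card + 1 := by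
    refine card_le_sdiff_of_interleaved fun x hx y hy hxy hxy' => ?_
    simp only [S, Multiset.mem_toFinset] at hx hy hxy'
    obtain ⟨z, hz, hfz⟩ := hgap x hx y hy hxy hxy'
    exact ⟨z, Multiset.mem_toFinset.2 ((mem_roots hf).2 hfz), hz⟩
  have hT : (T \ S).card ≤ ∑ x ∈ T \ S, f.roots.count x := by
    rw [card_eq_sum_ones]
    gcongr with x hx
    exact Multiset.one_le_count_iff_mem.2 (Multiset.mem_toFinset.1 (mem_sdiff.1 hx).1)
  calc P.roots.card = ∑ x ∈ S, P.roots.count x := (Multiset.toFinset_sum_count_eq _).symm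
    _ ≤ ∑ x ∈ S, (f.roots.count x + 1) := by
      gcongr with x hx
      simpa only [count_roots] using hmult x (Multiset.mem_toFinset.1 hx)
    _ ≤ ∑ x ∈ S, f.roots.count x + ∑ x ∈ T \ S, f.roots.count x + 1 := by
      rw [sum_add_distrib, ← card_eq_sum_ones]
      omega
    _ = f.roots.card + 1 := by
      rw [← sum_union disjoint_sdiff, union_sdiff_self_eq_union,
        Multiset.sum_count_eq_card fun x hx => mem_union_right _ (Multiset.mem_toFinset.2 hx)]

theorem pow_rootMultiplicity_add_sub_one_dvd_mul_derivative [CommRing R] [NoZeroDivisors R]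
    [CharZero R] (p q : R[X]) (x : R) :
    (X - C x) ^ (p.rootMultiplicity x + q.rootMultiplicity x - 1) ∣ q * derivative p := by
  have hp' : (X - C x) ^ (p.rootMultiplicity x - 1) ∣ derivative p :=
    (pow_dvd_pow _ (p.rootMultiplicity_sub_one_le_derivative_rootMultiplicity x)).trans
      (pow_rootMultiplicity_dvd _ x)
  calc (X - C x) ^ (p.rootMultiplicity x + q.rootMultiplicity x - 1)
      ∣ (X - C x) ^ (q.rootMultiplicity x + (p.rootMultiplicity x - 1)) :=
        pow_dvd_pow _ (by omega)
    _ ∣ q * derivative p :=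
        pow_add (X - C x) _ _ ▸ mul_dvd_mul (pow_rootMultiplicity_dvd q x) hp'

theorem rootMultiplicity_mul_le_rootMultiplicity_mul_derivative_add [CommRing R] [IsDomain R]
    [CharZero R] {p q : R[X]} (a : R) (hpq : p * q ≠ 0)
    (hf : q * derivative p + C a * (derivative q * p) ≠ 0) (x : R) :
    (p * q).rootMultiplicity x ≤
      (q * derivative p + C a * (derivative q * p)).rootMultiplicity x + 1 := by
  have hqp := pow_rootMultiplicity_add_sub_one_dvd_mul_derivative q p x
  rw [add_comm, mul_comm] at hqp
  have := (le_rootMultiplicity_iff hf).2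
    (dvd_add (pow_rootMultiplicity_add_sub_one_dvd_mul_derivative p q x) (hqp.mul_left (C a)))
  rw [rootMultiplicity_mul hpq]
  omega

theorem coeff_mul_derivative_natDegree_add_sub_one [CommSemiring R] (p q : R[X])
    (hp : 1 ≤ p.natDegree) :
    (q * derivative p).coeff (p.natDegree + q.natDegree - 1) =
      p.natDegree * (p.leadingCoeff * q.leadingCoeff) := by
  rw [show p.natDegree + q.natDegree - 1 = q.natDegree + (p.natDegree - 1) by omega,
    coeff_mul_add_eq_of_natDegree_le le_rfl (natDegree_derivative_le p), coeff_derivative,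
    ← Nat.cast_add_one, Nat.sub_add_cancel hp, leadingCoeff, leadingCoeff]
  ring

theorem mul_derivative_add_C_mul_ne_zero [Field R] [LinearOrder R] [IsStrictOrderedRing R]
    {p q : R[X]} (hp : 1 ≤ p.natDegree) (hq : 1 ≤ q.natDegree) {a : R} (ha : 0 ≤ a) :
    q * derivative p + C a * (derivative q * p) ≠ 0 := by
  intro h
  have hcoeff := congrArg (fun g : R[X] => g.coeff (p.natDegree + q.natDegree - 1)) h
  simp only [coeff_add, coeff_C_mul, coeff_zero] at hcoeff
  rw [coeff_mul_derivative_natDegree_add_sub_one p q hp, mul_comm (derivative q),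
    add_comm p.natDegree, coeff_mul_derivative_natDegree_add_sub_one q p hq] at hcoeff
  have hlc : p.leadingCoeff * q.leadingCoeff ≠ 0 := by
    simp [ne_zero_of_natDegree_gt hp, ne_zero_of_natDegree_gt hq]
  have hdeg : (0 : R) < p.natDegree + a * q.natDegree := by
    have : (1 : R) ≤ p.natDegree := by exact_mod_cast hp
    positivity
  exact mul_ne_zero hlc hdeg.ne' (by linear_combination hcoeff)

theorem exists_isRoot_mul_derivative_add_C_mul_mem_Ioo {p q : ℝ[X]} {a : ℝ} (ha : 0 < a)
    {x y : ℝ} (hxy : x < y) (hx : (p * q).IsRoot x) (hy : (p * q).IsRoot y)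
    (hq : ∀ t ∈ Set.Ioo x y, ¬ q.IsRoot t) :
    ∃ c ∈ Set.Ioo x y, (q * derivative p + C a * (derivative q * p)).IsRoot c := by
  -- `v = p * |q| ^ a`, whose derivative `|q| ^ (a - 2) * q * f` no longer involves the sign of `q`
  set v : ℝ → ℝ := fun t => p.eval t * (q.eval t ^ 2) ^ (a / 2)
  have hv : ∀ t, (p * q).IsRoot t → v t = 0 := by
    intro t ht
    have hpq : p.eval t * q.eval t = 0 := by rw [← eval_mul]; exact ht
    rcases mul_eq_zero.1 hpq with h | h <;>
      simp [v, h, Real.zero_rpow (by positivity : a / 2 ≠ 0)]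
  have hderiv : ∀ t ∈ Set.Ioo x y, HasDerivAt v
      ((q.eval t ^ 2) ^ (a / 2 - 1) * q.eval t *
        (q * derivative p + C a * (derivative q * p)).eval t) t := by
    intro t ht
    have hq2 : q.eval t ^ 2 ≠ 0 := pow_ne_zero 2 (hq t ht)
    refine ((p.hasDerivAt t).mul
      (((q.hasDerivAt t).pow 2).rpow_const (Or.inl hq2))).congr_deriv ?_
    have hsplit : (q.eval t ^ 2) ^ (a / 2) = (q.eval t ^ 2) ^ (a / 2 - 1) * q.eval t ^ 2 := by
      rw [← Real.rpow_add_one hq2, sub_add_cancel]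
    simp only [Pi.pow_apply, hsplit, eval_add, eval_mul, eval_C]
    ring
  have hcont : Continuous v :=
    p.continuous.mul ((q.continuous.pow 2).rpow_const fun _ => Or.inr (by positivity))
  obtain ⟨c, hc, h0⟩ :=
    exists_hasDerivAt_eq_zero hxy hcont.continuousOn (by rw [hv x hx, hv y hy]) hderiv
  refine ⟨c, hc, ?_⟩
  have hqc : q.eval c ≠ 0 := hq c hc
  have hpow : (q.eval c ^ 2) ^ (a / 2 - 1) ≠ 0 := (Real.rpow_pos_of_pos (by positivity) _).ne'
  simpa [hpow, hqc] using h0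

end Polynomial

theorem stmt0 (p q : Polynomial ℝ) (hp : 1 ≤ p.natDegree) (hq : 1 ≤ q.natDegree)
    (α : ℝ) (hα : 0 ≤ α) :
    ZR p + ZR q - 1 ≤ ZR (q * derivative p + C α * (derivative q * p)) := by
  have hf := mul_derivative_add_C_mul_ne_zero hp hq hα
  unfold ZR
  rcases hα.eq_or_lt with rfl | hα
  · simp only [map_zero, zero_mul, add_zero] at hf ⊢
    have := p.card_roots_le_derivative
    rw [roots_mul hf, Multiset.card_add]
    omega
  · have hpq : p * q ≠ 0 := mul_ne_zero (ne_zero_of_natDegree_gt hp) (ne_zero_of_natDegree_gt hq)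
    have hcount := card_roots_le_card_roots_add_one_of_interleaved hf
      (fun x _ => rootMultiplicity_mul_le_rootMultiplicity_mul_derivative_add α hpq hf x)
      fun x hx y hy hxy hgap => exists_isRoot_mul_derivative_add_C_mul_mem_Ioo hα hxy
        (isRoot_of_mem_roots hx) (isRoot_of_mem_roots hy) fun t ht hqt =>
          hgap t ((mem_roots hpq).2 (by simp [hqt.eq_zero])) ht
    rw [roots_mul hpq, Multiset.card_add] at hcount
    omega
end

section
/- Let p and q be real polynomials and α ≥ 0. Then the number of non-real zeros (with multiplicity) of q(x)·p'(x) + α·q'(x)·p(x) is at most Z_C(p) + Z_C(q), where Z_C denotes the number of non-real complex zeros counted with multiplicity. -/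
/-!
Let `f = q p' + α q' p`. Over `ℂ`, `ZC f = deg f - ZR f`, and `deg f < deg (p q)`. For `α > 0`
every real root of `p q` of multiplicity `m` is a root of `f` of multiplicity at least `m - 1`,
and between two consecutive distinct real roots of `p q` Rolle's theorem applied to `|q| ^ α p`
produces a further real root of `f`; hence `ZR f ≥ ZR (p q) - 1` and
`ZC f ≤ ZC (p q) = ZC p + ZC q`. For `α = 0`, `f = q p'` and `ZC p' ≤ ZC p` by the same count
applied to `p` and `p'`.
-/

open Polynomial Finset

open Set

theorem Multiset.card_le_card_add_one_of_count_le {α : Type*} [DecidableEq α] {s t : Multiset α}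
    (hcount : ∀ a, s.count a ≤ t.count a + 1)
    (hsupp : s.toFinset.card ≤ (t.toFinset \ s.toFinset).card + 1) :
    Multiset.card s ≤ Multiset.card t + 1 := by
  have hsdiff :
      (t.toFinset \ s.toFinset).card ≤ ∑ a ∈ t.toFinset \ s.toFinset, t.count a := by
    rw [Finset.card_eq_sum_ones]
    gcongr with a ha
    exact Multiset.count_pos.2 (Multiset.mem_toFinset.1 (Finset.mem_sdiff.1 ha).1)
  calc Multiset.card s = ∑ a ∈ s.toFinset, s.count a := (Multiset.toFinset_sum_count_eq s).symm
    _ ≤ ∑ a ∈ s.toFinset, (t.count a + 1) := Finset.sum_le_sum fun a _ => hcount a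
    _ = ∑ a ∈ s.toFinset, t.count a + s.toFinset.card := by
      rw [Finset.sum_add_distrib, Finset.card_eq_sum_ones]
    _ ≤ ∑ a ∈ s.toFinset, t.count a + (∑ a ∈ t.toFinset \ s.toFinset, t.count a + 1) := by
      grw [hsupp, hsdiff]
    _ = ∑ a ∈ s.toFinset ∪ t.toFinset, t.count a + 1 := by
      rw [← add_assoc, ← Finset.sum_union Finset.disjoint_sdiff,
        Finset.union_sdiff_self_eq_union]
    _ = Multiset.card t + 1 := by
      rw [Multiset.sum_count_eq_card fun a ha =>
        Finset.mem_union_right _ (Multiset.mem_toFinset.2 ha)]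

theorem roots_map_complex_filter_im_eq_zero (p : ℝ[X]) :
    (p.map (algebraMap ℝ ℂ)).roots.filter (fun z => z.im = 0) =
      p.roots.map (algebraMap ℝ ℂ) := by
  ext z
  rw [Multiset.count_filter]
  split_ifs with hz
  · obtain ⟨x, rfl⟩ : ∃ x : ℝ, algebraMap ℝ ℂ x = z :=
      ⟨z.re, Complex.ext (by simp) (by simp [hz])⟩
    rw [Multiset.count_map_eq_count' _ _ (algebraMap ℝ ℂ).injective, count_roots, count_roots,
      eq_rootMultiplicity_map (algebraMap ℝ ℂ).injective]
  · refine (Multiset.count_eq_zero.2 fun hz' => hz ?_).symm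
    obtain ⟨x, -, rfl⟩ := Multiset.mem_map.1 hz'
    simp

theorem ZC_add_ZR (p : ℝ[X]) : ZC p + ZR p = p.natDegree := by
  classical
  rw [ZC, ZR, ← Multiset.card_map (algebraMap ℝ ℂ), ← roots_map_complex_filter_im_eq_zero,
    ← Multiset.card_add, add_comm, ← natDegree_map (algebraMap ℝ ℂ),
    (IsAlgClosed.splits _).natDegree_eq_card_roots]
  convert congrArg Multiset.card (Multiset.filter_add_not (fun z : ℂ => z.im = 0) _)

theorem ZC_mul {p q : ℝ[X]} (hp : p ≠ 0) (hq : q ≠ 0) : ZC (p * q) = ZC p + ZC q := by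
  rw [ZC, ZC, ZC, Polynomial.map_mul, roots_mul (mul_ne_zero (map_ne_zero hp) (map_ne_zero hq)),
    Multiset.filter_add, Multiset.card_add]

theorem ZC_le_of_natDegree_lt_of_ZR_le {f g : ℝ[X]} (hdeg : f.natDegree < g.natDegree)
    (hZR : ZR g ≤ ZR f + 1) : ZC f ≤ ZC g := by
  have := ZC_add_ZR f
  have := ZC_add_ZR g
  omega

theorem ZC_derivative_le (p : ℝ[X]) : ZC (derivative p) ≤ ZC p := by
  rcases eq_or_ne p.natDegree 0 with hp | hp
  · rw [eq_C_of_natDegree_eq_zero hp, derivative_C, ZC]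
    simp
  · exact ZC_le_of_natDegree_lt_of_ZR_le (natDegree_derivative_lt hp) p.card_roots_le_derivative

section Combination

variable {R : Type*} [CommRing R] (p q : R[X]) (a : R)

theorem pow_add_sub_one_dvd_mul_derivative_add {d : R[X]} {m n : ℕ} (hp : d ^ m ∣ p)
    (hq : d ^ n ∣ q) : d ^ (m + n - 1) ∣ q * derivative p + C a * (derivative q * p) := by
  refine dvd_add ?_ (Dvd.dvd.mul_left ?_ _)
  · exact (pow_dvd_pow d (by omega : m + n - 1 ≤ n + (m - 1))).trans <| by
      rw [pow_add]; exact mul_dvd_mul hq (pow_sub_one_dvd_derivative_of_pow_dvd hp)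
  · exact (pow_dvd_pow d (by omega : m + n - 1 ≤ (n - 1) + m)).trans <| by
      rw [pow_add]; exact mul_dvd_mul (pow_sub_one_dvd_derivative_of_pow_dvd hq) hp

variable [IsDomain R]

theorem rootMultiplicity_mul_le_rootMultiplicity_mul_derivative_add
    (hf : q * derivative p + C a * (derivative q * p) ≠ 0) (r : R) :
    (p * q).rootMultiplicity r ≤
      (q * derivative p + C a * (derivative q * p)).rootMultiplicity r + 1 := by
  have hpq : p * q ≠ 0 := by
    rintro h
    rcases mul_eq_zero.1 h with rfl | rfl <;> simp at hf
  have := (le_rootMultiplicity_iff hf).2 <| pow_add_sub_one_dvd_mul_derivative_add p q a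
    (pow_rootMultiplicity_dvd p r) (pow_rootMultiplicity_dvd q r)
  rw [rootMultiplicity_mul hpq]
  omega

theorem degree_mul_derivative_add_lt (hp : p ≠ 0) (hq : q ≠ 0) :
    (q * derivative p + C a * (derivative q * p)).degree < (p * q).degree := by
  have h₁ : (q * derivative p).degree < (p * q).degree := by
    rw [degree_mul, degree_mul, add_comm p.degree]
    exact WithBot.add_lt_add_left (degree_ne_bot.2 hq) (degree_derivative_lt hp)
  have h₂ : (C a * (derivative q * p)).degree < (p * q).degree := by
    rw [← smul_eq_C_mul]
    refine (degree_smul_le _ _).trans_lt ?_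
    rw [degree_mul, degree_mul, add_comm]
    exact WithBot.add_lt_add_left (degree_ne_bot.2 hp) (degree_derivative_lt hq)
  exact (degree_add_le _ _).trans_lt (max_lt h₁ h₂)

end Combination

section Rolle

variable (p q : ℝ[X]) (α : ℝ)

theorem hasDerivAt_sq_rpow_mul {c : ℝ} (hc : q.eval c ≠ 0) :
    HasDerivAt (fun t => (q.eval t ^ 2) ^ (α / 2) * p.eval t)
      ((q.eval c ^ 2) ^ (α / 2 - 1) * q.eval c *
        (q * derivative p + C α * (derivative q * p)).eval c) c := by
  have hc2 : q.eval c ^ 2 ≠ 0 := pow_ne_zero 2 hc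
  refine ((((q.hasDerivAt c).pow 2).rpow_const (p := α / 2) (Or.inl hc2)).mul
    (p.hasDerivAt c)).congr_deriv ?_
  simp only [Pi.pow_apply, eval_add, eval_mul, eval_C, Nat.cast_ofNat]
  rw [Real.rpow_sub_one hc2]
  field_simp
  ring

/-- Rolle's theorem for `|q| ^ α * p = (q ^ 2) ^ (α / 2) * p`, which vanishes at every root of
`p * q` when `α > 0` and whose derivative is `|q| ^ (α - 2) * q` times the combination. -/
theorem exists_eval_mul_derivative_add_eq_zero (hα : 0 < α) {x y : ℝ} (hxy : x < y)
    (hx : (p * q).IsRoot x) (hy : (p * q).IsRoot y) (hq : ∀ c ∈ Ioo x y, q.eval c ≠ 0) :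
    ∃ c ∈ Ioo x y, (q * derivative p + C α * (derivative q * p)).eval c = 0 := by
  set g : ℝ → ℝ := fun t => (q.eval t ^ 2) ^ (α / 2) * p.eval t
  have hg : ∀ z, (p * q).IsRoot z → g z = 0 := by
    intro z hz
    rcases (by simpa using hz : p.eval z = 0 ∨ q.eval z = 0) with h | h
    · simp [g, h]
    · simp [g, h, Real.zero_rpow (by positivity : α / 2 ≠ 0)]
  have hcont : Continuous g :=
    ((q.continuous.pow 2).rpow_const fun _ => Or.inr (by positivity)).mul p.continuous
  obtain ⟨c, hc, hc0⟩ :=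
    exists_deriv_eq_zero hxy hcont.continuousOn ((hg x hx).trans (hg y hy).symm)
  refine ⟨c, hc, ?_⟩
  have hK : (q.eval c ^ 2) ^ (α / 2 - 1) * q.eval c ≠ 0 :=
    mul_ne_zero (Real.rpow_pos_of_pos (by positivity [hq c hc]) _).ne' (hq c hc)
  have := (hasDerivAt_sq_rpow_mul p q α (hq c hc)).deriv
  rw [hc0] at this
  exact (mul_eq_zero.1 this.symm).resolve_left hK

theorem ZR_mul_le_ZR_mul_derivative_add (hα : 0 < α)
    (hf : q * derivative p + C α * (derivative q * p) ≠ 0) :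
    ZR (p * q) ≤ ZR (q * derivative p + C α * (derivative q * p)) + 1 := by
  have hpq : p * q ≠ 0 := by
    rintro h
    rcases mul_eq_zero.1 h with rfl | rfl <;> simp at hf
  refine Multiset.card_le_card_add_one_of_count_le (fun r => ?_)
    (Finset.card_le_sdiff_of_interleaved fun x hx y hy hxy hgap => ?_)
  · simp only [count_roots]
    exact rootMultiplicity_mul_le_rootMultiplicity_mul_derivative_add p q α hf r
  · rw [Multiset.mem_toFinset, mem_roots hpq] at hx hy
    have hq : ∀ c ∈ Ioo x y, q.eval c ≠ 0 := fun c hc hqc =>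
      hgap c (Multiset.mem_toFinset.2 ((mem_roots hpq).2 (by simp [hqc]))) hc
    obtain ⟨c, hc, hfc⟩ := exists_eval_mul_derivative_add_eq_zero p q α hα hxy hx hy hq
    exact ⟨c, Multiset.mem_toFinset.2 ((mem_roots hf).2 hfc), hc⟩

end Rolle

theorem stmt1 (p q : Polynomial ℝ) (α : ℝ) (hα : 0 ≤ α) :
    ZC (q * derivative p + C α * (derivative q * p)) ≤ ZC p + ZC q := by
  set f := q * derivative p + C α * (derivative q * p)
  rcases eq_or_ne f 0 with hf | hf
  · simp [hf, ZC]
  obtain ⟨hp, hq⟩ : p ≠ 0 ∧ q ≠ 0 := by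
    constructor <;> rintro rfl <;> simp [f] at hf
  rcases hα.eq_or_lt with rfl | hα
  · have hp' : derivative p ≠ 0 := by
      rintro h
      simp [f, h] at hf
    calc ZC f = ZC q + ZC (derivative p) := by
          simp only [f, C_0, zero_mul, add_zero, ZC_mul hq hp']
      _ ≤ ZC p + ZC q := by have := ZC_derivative_le p; omega
  · calc ZC f ≤ ZC (p * q) :=
          ZC_le_of_natDegree_lt_of_ZR_le
            (natDegree_lt_natDegree hf (degree_mul_derivative_add_lt p q α hp hq))
            (ZR_mul_le_ZR_mul_derivative_add p q α hα hf)
      _ = ZC p + ZC q := ZC_mul hp hq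
end

section
/- Let p(x) = Σ_{k=0}^n a_k x^k be a real polynomial of degree n. If α is a real number with α ≥ 0 or α ≤ −n, then the number of non-real zeros of Σ_{k=0}^n (k+α) a_k x^k is at most the number of non-real zeros of p (counted with multiplicity). -/
open Polynomial Finset

/-!
Write `q = x p' + α p`. Since `deg q ≤ deg p` and real plus non-real zeros add up to the degree,
it suffices for `α ≥ 0` to show that `q` has at least as many real zeros as `p`. For `α > 0`
this is Rolle's theorem applied to `|x|^α p(x)`, which vanishes at `0` and at every real zero of
`p`: between consecutive such points `q` has a zero, and a zero of `p` of multiplicity `m` is a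
zero of `q` of multiplicity at least `m - 1` (at least `m` at `0`). For `α = 0`, `q = x p'` and
this is the classical count for `p'`. The range `α ≤ -n` is reduced to `α ≥ 0` by the reflection
`p ↦ xⁿ p(1/x)`, which turns `q` into `-(x r' + (-n - α) r)` for `r` the reflection of `p`, and
which preserves the number of non-real zeros since it inverts the non-zero roots.
-/

namespace Polynomial

section EulerOp

variable {R : Type*} [CommRing R]

noncomputable def eulerOp (α : R) (p : R[X]) : R[X] := X * derivative p + C α * p

theorem coeff_eulerOp (α : R) (p : R[X]) (i : ℕ) :
    (eulerOp α p).coeff i = (i + α) * p.coeff i := by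
  rcases i with _ | i
  · simp [eulerOp]
  · simp [eulerOp, coeff_derivative]
    ring

theorem natDegree_eulerOp_le (α : R) (p : R[X]) : (eulerOp α p).natDegree ≤ p.natDegree :=
  natDegree_le_iff_coeff_eq_zero.mpr fun i hi => by
    rw [coeff_eulerOp, coeff_eq_zero_of_natDegree_lt hi, mul_zero]

theorem sum_range_coeff_eq_eulerOp (α : R) {p : R[X]} {n : ℕ} (hpn : p.natDegree ≤ n) :
    ∑ k ∈ range (n + 1), C ((k : R) + α) * C (p.coeff k) * X ^ k = eulerOp α p := by
  ext i
  simp only [finsetSum_coeff, ← C_mul, coeff_C_mul_X_pow, coeff_eulerOp, sum_ite_eq, mem_range]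
  split_ifs with hi
  · rfl
  · rw [coeff_eq_zero_of_natDegree_lt (by omega), mul_zero]

theorem eulerOp_eq_neg_reflect (α : R) {p : R[X]} {n : ℕ} (hpn : p.natDegree ≤ n) :
    eulerOp α p = -reflect n (eulerOp (-n - α) (reflect n p)) := by
  ext i
  rw [coeff_eulerOp, coeff_neg, coeff_reflect, coeff_eulerOp, coeff_reflect, revAt_invol]
  rcases le_or_gt i n with hi | hi
  · rw [revAt_le hi, Nat.cast_sub hi]
    ring
  · rw [coeff_eq_zero_of_natDegree_lt (hpn.trans_lt hi)]
    ring

theorem pow_sub_one_dvd_eulerOp_of_pow_dvd (α : R) {p q : R[X]} {m : ℕ} (h : q ^ m ∣ p) :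
    q ^ (m - 1) ∣ eulerOp α p :=
  dvd_add (dvd_mul_of_dvd_right (pow_sub_one_dvd_derivative_of_pow_dvd h) X)
    (dvd_mul_of_dvd_right ((pow_dvd_pow q (m.sub_le 1)).trans h) (C α))

theorem X_pow_dvd_eulerOp_of_X_pow_dvd (α : R) {p : R[X]} {m : ℕ} (h : X ^ m ∣ p) :
    X ^ m ∣ eulerOp α p := by
  rcases m with _ | m
  · simp
  · refine dvd_add ?_ (dvd_mul_of_dvd_right h (C α))
    have h' : X ^ m ∣ derivative p := by simpa using pow_sub_one_dvd_derivative_of_pow_dvd h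
    rw [pow_succ']
    exact mul_dvd_mul_left X h'

end EulerOp

theorem reverse_X_sub_C {R : Type*} [CommRing R] [Nontrivial R] (z : R) :
    reverse (X - C z) = 1 - C z * X := by
  rw [reverse, natDegree_X_sub_C]
  ext i
  rcases i with _ | _ | i <;> simp [coeff_one, coeff_X, coeff_C]

theorem reflect_eq_X_pow_mul_reverse {R : Type*} [Semiring R] {p : R[X]} {N : ℕ}
    (hp : p.natDegree ≤ N) : reflect N p = X ^ (N - p.natDegree) * reverse p := by
  have h := reflect_mul (1 : R[X]) p (F := N - p.natDegree)
    (natDegree_one.trans_le (Nat.zero_le _)) le_rfl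
  rwa [one_mul, Nat.sub_add_cancel hp, reflect_one] at h

end Polynomial

open scoped Classical in
noncomputable def nonrealRootCount (F : ℂ[X]) : ℕ := (F.roots.filter fun z => z.im ≠ 0).card

theorem ZC_eq_nonrealRootCount (p : ℝ[X]) : ZC p = nonrealRootCount (p.map (algebraMap ℝ ℂ)) :=
  rfl

theorem nonrealRootCount_mul {F G : ℂ[X]} (hF : F ≠ 0) (hG : G ≠ 0) :
    nonrealRootCount (F * G) = nonrealRootCount F + nonrealRootCount G := by
  simp only [nonrealRootCount, roots_mul (mul_ne_zero hF hG), Multiset.filter_add,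
    Multiset.card_add]

theorem nonrealRootCount_X_pow (k : ℕ) : nonrealRootCount (X ^ k) = 0 := by
  simp [nonrealRootCount]

theorem nonrealRootCount_reverse_X_sub_C (z : ℂ) :
    nonrealRootCount (reverse (X - C z)) = nonrealRootCount (X - C z) := by
  rw [reverse_X_sub_C]
  rcases eq_or_ne z 0 with rfl | hz
  · simp [nonrealRootCount, Multiset.filter_singleton]
  · have h : 1 - C z * X = C (-z) * (X - C z⁻¹) := by
      rw [mul_sub, ← C_mul, neg_mul, mul_inv_cancel₀ hz, C_neg, C_neg, C_1]
      ring
    rw [h, nonrealRootCount, nonrealRootCount, roots_C_mul _ (neg_ne_zero.mpr hz), roots_X_sub_C,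
      roots_X_sub_C]
    by_cases him : z.im = 0 <;> simp [Multiset.filter_singleton, Complex.inv_im, hz, him]

theorem nonrealRootCount_reverse (F : ℂ[X]) : nonrealRootCount F.reverse = nonrealRootCount F := by
  suffices h : ∀ (c : ℂ) (s : Multiset ℂ), c ≠ 0 →
      nonrealRootCount (C c * (s.map fun z => X - C z).prod).reverse =
        nonrealRootCount (C c * (s.map fun z => X - C z).prod) by
    rcases eq_or_ne F 0 with rfl | hF
    · rfl
    rw [← C_leadingCoeff_mul_prod_multiset_X_sub_C (p := F) IsAlgClosed.card_roots_eq_natDegree]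
    exact h _ _ (leadingCoeff_ne_zero.mpr hF)
  intro c s hc
  induction s using Multiset.induction_on with
  | empty => simp
  | cons z s ih =>
    have hP : C c * (s.map fun z => X - C z).prod ≠ 0 :=
      mul_ne_zero (C_ne_zero.mpr hc)
        (monic_multiset_prod_of_monic _ _ fun z _ => monic_X_sub_C z).ne_zero
    rw [Multiset.map_cons, Multiset.prod_cons, mul_left_comm, reverse_mul_of_domain,
      nonrealRootCount_mul (X_sub_C_ne_zero z) hP,
      nonrealRootCount_mul (reverse_eq_zero.not.mpr (X_sub_C_ne_zero z))
        (reverse_eq_zero.not.mpr hP),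
      ih, nonrealRootCount_reverse_X_sub_C]

theorem nonrealRootCount_reflect {F : ℂ[X]} {N : ℕ} (hF : F.natDegree ≤ N) :
    nonrealRootCount (reflect N F) = nonrealRootCount F := by
  rcases eq_or_ne F 0 with rfl | hF0
  · rw [reflect_zero]
  rw [reflect_eq_X_pow_mul_reverse hF, nonrealRootCount_mul (pow_ne_zero _ X_ne_zero)
    (reverse_eq_zero.not.mpr hF0), nonrealRootCount_X_pow, zero_add, nonrealRootCount_reverse]

theorem ZC_reflect {p : ℝ[X]} {N : ℕ} (hp : p.natDegree ≤ N) : ZC (reflect N p) = ZC p := by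
  rw [ZC_eq_nonrealRootCount, ← reflect_map, nonrealRootCount_reflect (natDegree_map_le.trans hp)]
  rfl

theorem ZC_neg (p : ℝ[X]) : ZC (-p) = ZC p := by
  simp only [ZC, Polynomial.map_neg, roots_neg]

theorem Complex.mem_range_algebraMap_iff {z : ℂ} : z ∈ (algebraMap ℝ ℂ).range ↔ z.im = 0 :=
  ⟨by rintro ⟨r, rfl⟩; simp, fun h => ⟨z.re, Complex.ext (by simp) (by simp [h])⟩⟩

theorem ZR_add_ZC (p : ℝ[X]) : ZR p + ZC p = p.natDegree := by
  classical
  have hreal : (p.map (algebraMap ℝ ℂ)).roots.filter (fun z => ¬z.im ≠ 0) =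
      p.roots.map (algebraMap ℝ ℂ) := by
    rw [← filter_roots_map_range_eq_map_roots (algebraMap ℝ ℂ).injective]
    exact Multiset.filter_congr fun z _ => by rw [not_not, Complex.mem_range_algebraMap_iff]
  rw [ZR, ZC, ← Multiset.card_map (algebraMap ℝ ℂ), ← hreal, add_comm, ← Multiset.card_add,
    Multiset.filter_add_not, IsAlgClosed.card_roots_eq_natDegree, natDegree_map]

theorem ZC_le_ZC_of_natDegree_le_of_ZR_le {p q : ℝ[X]} (hdeg : q.natDegree ≤ p.natDegree)
    (hZR : ZR p ≤ ZR q) : ZC q ≤ ZC p := by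
  have hp := ZR_add_ZC p
  have hq := ZR_add_ZC q
  omega

/-- Every point of `s` loses at most one unit of multiplicity from `P` to `Q`, and `a` none;
the remaining `#s - 1` units are paid for by the elements of `Q` interleaved with `s`. -/
theorem Multiset.card_le_card_of_interleaved {ι : Type*} [DecidableEq ι] {P Q : Multiset ι}
    {s : Finset ι} {a : ι} (hPs : P.toFinset ⊆ s) (ha : a ∈ s) (hcount_a : P.count a ≤ Q.count a)
    (hcount : ∀ x ∈ s, P.count x ≤ Q.count x + 1) (hs : s.card ≤ (Q.toFinset \ s).card + 1) :
    Multiset.card P ≤ Multiset.card Q := by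
  have hP : Multiset.card P = ∑ x ∈ s, P.count x :=
    (Multiset.sum_count_eq_card fun x hx => hPs (Multiset.mem_toFinset.mpr hx)).symm
  have hQ : ∑ x ∈ s ∪ (Q.toFinset \ s), Q.count x = Multiset.card Q :=
    Multiset.sum_count_eq_card fun x hx => by simp [hx]
  have hnew : (Q.toFinset \ s).card ≤ ∑ x ∈ Q.toFinset \ s, Q.count x := by
    rw [Finset.card_eq_sum_ones]
    exact sum_le_sum fun x hx =>
      Multiset.one_le_count_iff_mem.mpr (Multiset.mem_toFinset.mp (mem_sdiff.mp hx).1)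
  have hold : ∑ x ∈ s.erase a, P.count x ≤ ∑ x ∈ s.erase a, Q.count x + (s.card - 1) := by
    rw [← Finset.card_erase_of_mem ha, Finset.card_eq_sum_ones, ← sum_add_distrib]
    exact sum_le_sum fun x hx => hcount x (mem_of_mem_erase hx)
  rw [hP, ← hQ, sum_union disjoint_sdiff, ← add_sum_erase s _ ha, ← add_sum_erase s _ ha]
  have : 1 ≤ s.card := Finset.card_pos.mpr ⟨a, ha⟩
  omega

/-- Rolle's theorem for `|t|^α p(t)`, written as `(t²)^(α/2) p(t)`: away from `0` its derivative
is `t (t²)^(α/2 - 1) (eulerOp α p)(t)`. -/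
theorem exists_mem_Ioo_isRoot_eulerOp {α : ℝ} (hα : 0 < α) (p : ℝ[X]) {x y : ℝ} (hxy : x < y)
    (h0 : (0 : ℝ) ∉ Set.Ioo x y) (hx : x = 0 ∨ p.IsRoot x) (hy : y = 0 ∨ p.IsRoot y) :
    ∃ c ∈ Set.Ioo x y, (eulerOp α p).IsRoot c := by
  set f : ℝ → ℝ := fun t => (t ^ 2) ^ (α / 2) * p.eval t
  have hf_zero : ∀ t, t = 0 ∨ p.IsRoot t → f t = 0 := by
    rintro t (rfl | ht)
    · simp [f, Real.zero_rpow (by positivity : α / 2 ≠ 0)]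
    · simp [f, ht.eq_zero]
  have hcont : ContinuousOn f (Set.Icc x y) :=
    ((continuous_pow 2).rpow_const fun _ => Or.inr (by positivity)).continuousOn.mul p.continuousOn
  have hderiv : ∀ t ∈ Set.Ioo x y,
      HasDerivAt f (t * (t ^ 2) ^ (α / 2 - 1) * (eulerOp α p).eval t) t := by
    intro t ht
    have ht0 : t ≠ 0 := fun h => h0 (h ▸ ht)
    have hsq : (t ^ 2) ^ (α / 2) = (t ^ 2) ^ (α / 2 - 1) * t ^ 2 := by
      rw [Real.rpow_sub_one (by positivity), div_mul_cancel₀ _ (by positivity)]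
    refine (((hasDerivAt_pow 2 t).rpow_const (p := α / 2) (Or.inl (by positivity))).mul
      (p.hasDerivAt t)).congr_deriv ?_
    simp only [eulerOp, eval_add, eval_mul, eval_X, eval_C, hsq]
    ring
  obtain ⟨c, hc, hc0⟩ := exists_hasDerivAt_eq_zero hxy hcont
    ((hf_zero x hx).trans (hf_zero y hy).symm) hderiv
  have hc_ne : c ≠ 0 := fun h => h0 (h ▸ hc)
  refine ⟨c, hc, ?_⟩
  simpa [hc_ne, (Real.rpow_pos_of_pos (by positivity : 0 < c ^ 2) _).ne'] using hc0

theorem eulerOp_ne_zero {α : ℝ} (hα : 0 < α) {p : ℝ[X]} (hp : p ≠ 0) : eulerOp α p ≠ 0 := by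
  intro h
  have := congrArg (coeff · p.natDegree) h
  simp only [coeff_eulerOp, coeff_zero, mul_eq_zero, coeff_natDegree, leadingCoeff_eq_zero] at this
  rcases this with h | h
  · linarith [(Nat.cast_nonneg p.natDegree : (0 : ℝ) ≤ _)]
  · exact hp h

theorem card_roots_le_card_roots_eulerOp {α : ℝ} (hα : 0 < α) (p : ℝ[X]) :
    Multiset.card p.roots ≤ Multiset.card (eulerOp α p).roots := by
  classical
  rcases eq_or_ne p 0 with rfl | hp
  · simp
  have hq := eulerOp_ne_zero hα hp
  set s := insert 0 p.roots.toFinset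
  refine Multiset.card_le_card_of_interleaved (s := s) (a := 0) (subset_insert _ _)
    (mem_insert_self _ _) ?_ (fun x _ => ?_) ?_
  · rw [count_roots, count_roots, le_rootMultiplicity_iff hq, C_0, sub_zero]
    exact X_pow_dvd_eulerOp_of_X_pow_dvd α (by simpa using pow_rootMultiplicity_dvd p 0)
  · have := (le_rootMultiplicity_iff hq).mpr
      (pow_sub_one_dvd_eulerOp_of_pow_dvd α (pow_rootMultiplicity_dvd p x))
    rw [count_roots, count_roots]
    omega
  · refine Finset.card_le_sdiff_of_interleaved fun x hx y hy hxy hgap => ?_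
    have hzero : ∀ z ∈ s, z = 0 ∨ p.IsRoot z := by simp [s, mem_roots hp]
    obtain ⟨c, hc, hqc⟩ := exists_mem_Ioo_isRoot_eulerOp hα p hxy (hgap 0 (mem_insert_self _ _))
      (hzero x hx) (hzero y hy)
    exact ⟨c, Multiset.mem_toFinset.mpr ((mem_roots hq).mpr hqc), hc⟩

theorem ZR_le_ZR_eulerOp_zero (p : ℝ[X]) : ZR p ≤ ZR (eulerOp 0 p) := by
  rw [show eulerOp 0 p = X * derivative p by simp [eulerOp]]
  rcases eq_or_ne (derivative p) 0 with hp' | hp'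
  · rw [eq_C_of_derivative_eq_zero hp']
    simp [ZR]
  · rw [ZR, ZR, roots_mul (mul_ne_zero X_ne_zero hp'), roots_X, Multiset.card_add,
      Multiset.card_singleton, add_comm]
    exact card_roots_le_derivative p

theorem ZC_eulerOp_le {α : ℝ} (hα : 0 ≤ α) (p : ℝ[X]) : ZC (eulerOp α p) ≤ ZC p := by
  refine ZC_le_ZC_of_natDegree_le_of_ZR_le (natDegree_eulerOp_le α p) ?_
  rcases hα.lt_or_eq with hα | rfl
  · exact card_roots_le_card_roots_eulerOp hα p
  · exact ZR_le_ZR_eulerOp_zero p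

theorem stmt3 (p : Polynomial ℝ) (n : ℕ) (hn : p.degree = n)
    (α : ℝ) (hα : 0 ≤ α ∨ α ≤ -(n : ℝ)) :
    ZC (∑ k ∈ Finset.range (n + 1), C ((k : ℝ) + α) * C (p.coeff k) * X ^ k) ≤ ZC p := by
  have hpn : p.natDegree ≤ n := natDegree_le_of_degree_le hn.le
  rw [sum_range_coeff_eq_eulerOp α hpn]
  rcases hα with hα | hα
  · exact ZC_eulerOp_le hα p
  · have hreflect : (reflect n p).natDegree ≤ n := natDegree_reflect_le.trans (max_le le_rfl hpn)
    rw [eulerOp_eq_neg_reflect α hpn, ZC_neg,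
      ZC_reflect ((natDegree_eulerOp_le _ _).trans hreflect), ← ZC_reflect hpn]
    exact ZC_eulerOp_le (by linarith) _
end

section
/- Let {g_k(x)}_{k=0}^m be real polynomials with deg(g_k) ≤ k for each k, and let n be a nonnegative integer. Then for every real polynomial p, D^n (Σ_{k=0}^m g_k(x)·p^{(k)}(x)) = Σ_{j=0}^m (Σ_{k=j}^m C(n, k−j)·g_k^{(k−j)}(x)) · (p^{(n)})^{(j)}(x), where D denotes differentiation and C(n,i) is the binomial coefficient (equal to 0 when i > n). -/
open Polynomial Finset

open scoped Classical in
lemma sum_swap_tri {M : Type*} [AddCommMonoid M] (m : ℕ) (f : ℕ → ℕ → M) :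
    ∑ k ∈ range (m+1), ∑ j ∈ range (k+1), f k j
      = ∑ j ∈ range (m+1), ∑ k ∈ Finset.Icc j m, f k j := by
  calc ∑ k ∈ range (m+1), ∑ j ∈ range (k+1), f k j
      = ∑ k ∈ range (m+1), ∑ j ∈ range (m+1), if j ≤ k then f k j else 0 := by
        refine Finset.sum_congr rfl fun k hk => ?_
        rw [← Finset.sum_filter]
        refine (Finset.sum_congr ?_ fun _ _ => rfl)
        ext j
        simp only [Finset.mem_filter, Finset.mem_range] at *
        omega
    _ = ∑ j ∈ range (m+1), ∑ k ∈ range (m+1), if j ≤ k then f k j else 0 := Finset.sum_comm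
    _ = ∑ j ∈ range (m+1), ∑ k ∈ Finset.Icc j m, f k j := by
        refine Finset.sum_congr rfl fun j hj => ?_
        rw [← Finset.sum_filter]
        refine (Finset.sum_congr ?_ fun _ _ => rfl)
        ext k
        simp only [Finset.mem_filter, Finset.mem_range, Finset.mem_Icc] at *
        omega

lemma aux6 (n k : ℕ) (g q : Polynomial ℝ) (hg : g.natDegree ≤ k) :
    derivative^[n] (g * derivative^[k] q)
      = ∑ j ∈ range (k+1),
          C ((n.choose (k-j) : ℝ)) * derivative^[k-j] g * derivative^[j] (derivative^[n] q) := by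
  set F : ℕ → Polynomial ℝ :=
    fun t => C ((n.choose t : ℝ)) * derivative^[t] g * derivative^[n + k - t] q with hF
  have hFzero : ∀ t, n < t ∨ k < t → F t = 0 := by
    rintro t (ht | ht)
    · simp [hF, Nat.choose_eq_zero_of_lt ht]
    · simp [hF, Polynomial.iterate_derivative_eq_zero (lt_of_le_of_lt hg ht)]
  have hL : derivative^[n] (g * derivative^[k] q) = ∑ t ∈ range (n+1), F t := by
    rw [Polynomial.iterate_derivative_mul, ← Finset.sum_range_reflect F (n+1)]
    refine Finset.sum_congr rfl fun i hi => ?_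
    simp only [Finset.mem_range] at hi
    have hi' : i ≤ n := by omega
    have h1 : n + 1 - 1 - i = n - i := by omega
    have h2 : n - (n - i) = i := by omega
    have h3 : n + k - (n - i) = i + k := by omega
    rw [h1, hF]
    simp only [h2, h3, Nat.choose_symm hi']
    rw [← Function.iterate_add_apply, nsmul_eq_mul, map_natCast C]
    ring
  have hR : (∑ j ∈ range (k+1),
        C ((n.choose (k-j) : ℝ)) * derivative^[k-j] g * derivative^[j] (derivative^[n] q))
      = ∑ t ∈ range (k+1), F t := by
    rw [← Finset.sum_range_reflect F (k+1)]
    refine Finset.sum_congr rfl fun j hj => ?_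
    simp only [Finset.mem_range] at hj
    have h1 : k + 1 - 1 - j = k - j := by omega
    have h3 : n + k - (k - j) = j + n := by omega
    rw [h1, hF]
    simp only [h3]
    rw [← Function.iterate_add_apply]
  rw [hL, hR]
  rcases le_total n k with h | h
  · exact Finset.sum_subset (Finset.range_subset_range.mpr (by omega))
      (fun x _ hx => hFzero x (Or.inl (by simp only [Finset.mem_range, not_lt] at hx; omega)))
  · exact (Finset.sum_subset (Finset.range_subset_range.mpr (by omega))
      (fun x _ hx => hFzero x (Or.inr (by simp only [Finset.mem_range, not_lt] at hx; omega)))).symm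

theorem stmt6 (m n : ℕ) (g : ℕ → Polynomial ℝ)
    (hg : ∀ k ≤ m, (g k).natDegree ≤ k) (p : Polynomial ℝ) :
    derivative^[n] (∑ k ∈ Finset.range (m + 1), g k * derivative^[k] p)
      = ∑ j ∈ Finset.range (m + 1),
          (∑ k ∈ Finset.Icc j m, C ((n.choose (k - j) : ℝ)) * derivative^[k - j] (g k))
            * derivative^[j] (derivative^[n] p) := by
  rw [Polynomial.iterate_derivative_sum]
  have h1 : ∀ k ∈ Finset.range (m+1),
      derivative^[n] (g k * derivative^[k] p)
        = ∑ j ∈ range (k+1),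
            C ((n.choose (k-j) : ℝ)) * derivative^[k-j] (g k) * derivative^[j] (derivative^[n] p) :=
    fun k hk => aux6 n k (g k) p (hg k (Nat.lt_succ_iff.mp (Finset.mem_range.mp hk)))
  rw [Finset.sum_congr rfl h1, sum_swap_tri]
  refine Finset.sum_congr rfl fun j _ => ?_
  rw [Finset.sum_mul]
end

section
/- Let g₀, g₁, g₂ be real polynomials with deg g_k ≤ k, and n a nonnegative integer. Then for every real polynomial p, the n-th derivative of g₂·p'' + g₁·p' + g₀·p equals g₂·(p^{(n)})'' + (n·g₂' + g₁)·(p^{(n)})' + (C(n,2)·g₂'' + n·g₁' + g₀)·p^{(n)}. -/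
open Polynomial Finset

theorem stmt7 (n : ℕ) (g₀ g₁ g₂ : Polynomial ℝ)
    (h₀ : g₀.natDegree ≤ 0) (h₁ : g₁.natDegree ≤ 1) (h₂ : g₂.natDegree ≤ 2)
    (p : Polynomial ℝ) :
    derivative^[n] (g₂ * derivative (derivative p) + g₁ * derivative p + g₀ * p)
      = g₂ * derivative (derivative (derivative^[n] p))
        + (C (n : ℝ) * derivative g₂ + g₁) * derivative (derivative^[n] p)
        + (C ((n.choose 2 : ℕ) : ℝ) * derivative (derivative g₂)
            + C (n : ℝ) * derivative g₁ + g₀) * derivative^[n] p := by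
  have e0 : derivative g₀ = 0 := by
    rw [Polynomial.eq_C_of_natDegree_le_zero h₀]; simp
  have e1 : derivative (derivative g₁) = 0 := by
    have : (derivative g₁).natDegree ≤ 0 := le_trans (natDegree_derivative_le g₁) (by omega)
    rw [Polynomial.eq_C_of_natDegree_le_zero this]; simp
  have e2 : derivative (derivative (derivative g₂)) = 0 := by
    have : (derivative (derivative g₂)).natDegree ≤ 0 :=
      le_trans (natDegree_derivative_le _) (by
        have := natDegree_derivative_le g₂; omega)
    rw [Polynomial.eq_C_of_natDegree_le_zero this]; simp
  induction n with
  | zero => simp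
  | succ n ih =>
    rw [Function.iterate_succ_apply', ih]
    have hc : ((n+1).choose 2 : ℝ) = (n.choose 2 : ℝ) + n := by
      rw [Nat.choose_succ_succ, Nat.choose_one_right]; push_cast; ring
    simp only [derivative_add, derivative_mul, derivative_C, e0, e1, e2,
      Function.iterate_succ_apply', hc]
    push_cast
    simp only [C_add, C_1]
    ring
end

section
/- For λ > −1 and a nonnegative integer n, define the operator Φ_a p := (x²−1)·p' + 2(1+a)·x·p on ℝ[x]. Then for every real polynomial p, D^n(Φ_λ(p') − n(n+1+2λ)·p) = Φ_{λ+n}((p^{(n)})') , i.e., the operator identity D^n ∘ (Φ_λ D − n(n+1+2λ) I) = Φ_{λ+n} ∘ D^{n+1} holds. -/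
open Polynomial Finset

/-- The differential operator Φₐ = (x²-1)D + 2(1+a)x·I on ℝ[x]. -/
noncomputable def Phi (a : ℝ) (p : Polynomial ℝ) : Polynomial ℝ :=
  (X ^ 2 - 1) * derivative p + C (2 * (1 + a)) * X * p

lemma phi_step (l : ℝ) (n : ℕ) (p : Polynomial ℝ) :
    derivative (Phi l (derivative p) - C (((n:ℝ)+1) * (((n:ℝ)+1) + 1 + 2 * l)) * p)
      = Phi (l+1) (derivative (derivative p))
        - C ((n : ℝ) * ((n : ℝ) + 1 + 2 * (l+1))) * derivative p := by
  simp only [Phi, derivative_sub, derivative_add, derivative_mul, derivative_C, derivative_X,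
    derivative_X_pow, derivative_sub, derivative_one]
  push_cast
  simp only [C_add, C_mul, C_sub, C_1, map_ofNat, map_natCast, map_one]
  ring

lemma phi_aux (n : ℕ) : ∀ (l : ℝ) (p : Polynomial ℝ),
    derivative^[n] (Phi l (derivative p) - C ((n : ℝ) * ((n : ℝ) + 1 + 2 * l)) * p)
      = Phi (l + n) (derivative^[n + 1] p) := by
  induction n with
  | zero => intro l p; simp
  | succ n ih =>
    intro l p
    rw [show (n + 1 : ℕ) + 1 = n + 2 from rfl]
    have h1 : derivative^[n+1] (Phi l (derivative p)
        - C (((n:ℕ):ℝ) * (((n:ℕ):ℝ) + 1 + 2 * l) + (((n:ℕ):ℝ) + 1 + 2 * l)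
          + (((n:ℕ):ℝ) + 1)) * p)
        = derivative^[n] (Phi (l+1) (derivative (derivative p))
          - C ((n : ℝ) * ((n : ℝ) + 1 + 2 * (l+1))) * derivative p) := by
      rw [Function.iterate_succ_apply]
      congr 1
      have := phi_step l n p
      convert this using 4
      ring
    push_cast
    rw [show ((n:ℝ)+1) * ((n:ℝ)+1+1+2*l) = (n:ℝ) * ((n:ℝ) + 1 + 2 * l) + ((n:ℝ) + 1 + 2 * l)
      + ((n:ℝ) + 1) by ring]
    rw [h1, ih (l+1) (derivative p)]
    rw [show l + 1 + (n:ℝ) = l + ((n:ℝ)+1) by ring]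
    congr 1

theorem stmt8 (l : ℝ) (hl : -1 < l) (n : ℕ) (p : Polynomial ℝ) :
    derivative^[n] (Phi l (derivative p) - C ((n : ℝ) * ((n : ℝ) + 1 + 2 * l)) * p)
      = Phi (l + n) (derivative^[n + 1] p) := by
  exact phi_aux n l p
end

section
/- For a real number α and nonnegative integer n, define the operator Ψ_a p := −x·p' + (x − (a+1))·p on ℝ[x]. Then D^n ∘ (Ψ_α D − n·I) = Ψ_{α+n} ∘ D^{n+1} as operators on ℝ[x]. -/
open Polynomial Finset

/-- The differential operator Ψₐ = -xD + (x-(a+1))I on ℝ[x]. -/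
noncomputable def Psi (a : ℝ) (p : Polynomial ℝ) : Polynomial ℝ :=
  -X * derivative p + (X - C (a + 1)) * p

lemma key (a c : ℝ) (q : Polynomial ℝ) :
    derivative (Psi a (derivative q) - C c * q)
      = Psi (a + 1) (derivative (derivative q)) - C (c - 1) * derivative q := by
  simp only [Psi, derivative_sub, derivative_add, derivative_mul, derivative_neg,
    derivative_X, derivative_C, derivative_one, map_add, map_sub, map_one]
  ring

theorem stmt9 (α : ℝ) (n : ℕ) (p : Polynomial ℝ) :
    derivative^[n] (Psi α (derivative p) - C (n : ℝ) * p)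
      = Psi (α + n) (derivative^[n + 1] p) := by
  induction n generalizing α p with
  | zero => simp
  | succ n ih =>
      rw [Function.iterate_succ_apply, key]
      have : ((n : ℝ) + 1 - 1) = (n : ℝ) := by ring
      push_cast
      rw [this, ih (α + 1) (derivative p)]
      rw [show α + 1 + n = α + (n + 1) by ring]
      congr 1
end

section
/- For any real a > −1, the operator Φ_a p := (x²−1)·p' + 2(1+a)·x·p is a complex zero decreasing operator: for every real polynomial p, Z_C((x²−1)p'(x) + 2(1+a)x·p(x)) ≤ Z_C(p). -/
open Polynomial Finset

/-
Since `Z_C(q) = deg q - #(real roots of q)` and `deg (Φₐ p) = deg p + 1` for `a > -1`, it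
suffices that `Φₐ p` has at least one more real root than `p`, counted with multiplicity.
Put `P = (x² - 1) p`. Then `Φₐ p = P' + 2a x p`, so a root of `P` of multiplicity `m` is a root
of `Φₐ p` of multiplicity at least `m - 1`. Away from `±1`, `Φₐ p` is a nonvanishing multiple of
the derivative of `F = |x² - 1|^(1+a) p`, which is continuous (as `1 + a > 0`) and vanishes at
the roots of `P`; Rolle's theorem gives a root of `Φₐ p` strictly between consecutive roots of
`P`. Counting as in `Polynomial.card_roots_le_derivative` gives
`#roots (Φₐ p) ≥ #roots P - 1 = #roots p + 1`.
-/

theorem Multiset.card_le_card_add_one_of_count_le_count_add_one {α : Type*} [DecidableEq α]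
    {M N : Multiset α} (hcount : ∀ x, M.count x ≤ N.count x + 1)
    (hnew : M.toFinset.card ≤ (N.toFinset \ M.toFinset).card + 1) :
    card M ≤ card N + 1 :=
  calc card M = ∑ x ∈ M.toFinset, M.count x := (toFinset_sum_count_eq M).symm
    _ ≤ ∑ x ∈ M.toFinset, (N.count x + 1) := Finset.sum_le_sum fun x _ => hcount x
    _ = ∑ x ∈ M.toFinset, N.count x + M.toFinset.card := by
      rw [Finset.sum_add_distrib, Finset.card_eq_sum_ones]
    _ ≤ ∑ x ∈ M.toFinset, N.count x + ∑ x ∈ N.toFinset \ M.toFinset, N.count x + 1 := by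
      grw [hnew, ← add_assoc, Finset.card_eq_sum_ones]
      gcongr with x hx
      exact Multiset.one_le_count_iff_mem.2 (Multiset.mem_toFinset.1 (Finset.mem_sdiff.1 hx).1)
    _ = card N + 1 := by
      rw [← Finset.sum_union Finset.disjoint_sdiff, Multiset.sum_count_eq_card]
      intro x hx
      simp [hx]

theorem HasDerivAt.abs_rpow_const {f : ℝ → ℝ} {f' x : ℝ} (hf : HasDerivAt f f' x) (hx : f x ≠ 0)
    (c : ℝ) : HasDerivAt (fun y => |f y| ^ c) (c * |f x| ^ c / f x * f') x := by
  refine (((hasDerivAt_abs hx).comp x hf).rpow_const (Or.inl (abs_ne_zero.2 hx))).congr_deriv ?_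
  rw [Function.comp_apply, Real.rpow_sub_one (abs_ne_zero.2 hx)]
  field_simp
  rw [mul_comm, ← sign_mul_self]
  ring

theorem roots_X_sq_sub_one : (X ^ 2 - 1 : ℝ[X]).roots = {1, -1} := by
  have : (X ^ 2 - 1 : ℝ[X]) = (X - C 1) * (X - C (-1)) := by
    simp only [map_one, map_neg]
    ring
  rw [this, roots_mul (mul_ne_zero (X_sub_C_ne_zero 1) (X_sub_C_ne_zero (-1))), roots_X_sub_C,
    roots_X_sub_C]
  rfl

theorem monic_X_sq_sub_one : (X ^ 2 - 1 : ℝ[X]).Monic := by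
  simpa using monic_X_pow_sub_C (1 : ℝ) two_ne_zero

theorem rootMultiplicity_X_sq_sub_one_le (x : ℝ) : (X ^ 2 - 1 : ℝ[X]).rootMultiplicity x ≤ 1 := by
  rw [← count_roots, roots_X_sq_sub_one]
  exact Multiset.nodup_iff_count_le_one.1 (by norm_num) x

theorem Phi_eq_derivative_add (a : ℝ) (p : ℝ[X]) :
    Phi a p = derivative ((X ^ 2 - 1) * p) + C (2 * a) * X * p := by
  simp only [Phi, derivative_mul, derivative_sub, derivative_X_pow, derivative_one, map_mul,
    map_add, map_one, Nat.cast_ofNat, map_ofNat]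
  ring

theorem coeff_Phi_natDegree_succ (a : ℝ) (p : ℝ[X]) :
    (Phi a p).coeff (p.natDegree + 1) = (p.natDegree + 2 * (1 + a)) * p.leadingCoeff := by
  rw [Phi_eq_derivative_add, coeff_add, coeff_derivative, sub_mul, one_mul, coeff_sub,
    coeff_X_pow_mul, coeff_eq_zero_of_natDegree_lt (by omega : p.natDegree < p.natDegree + 1 + 1),
    mul_assoc, coeff_C_mul, coeff_X_mul, leadingCoeff]
  push_cast
  ring

theorem natDegree_Phi_le (a : ℝ) (p : ℝ[X]) : (Phi a p).natDegree ≤ p.natDegree + 1 := by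
  rw [Phi_eq_derivative_add]
  refine natDegree_add_le_of_degree_le ((natDegree_derivative_le _).trans ?_) ?_
  · have h2 : (X ^ 2 - 1 : ℝ[X]).natDegree ≤ 2 := by compute_degree
    have := natDegree_mul_le (p := (X ^ 2 - 1 : ℝ[X])) (q := p)
    omega
  · compute_degree
    omega

theorem natDegree_Phi {a : ℝ} (ha : -1 < a) {p : ℝ[X]} (hp : p ≠ 0) :
    (Phi a p).natDegree = p.natDegree + 1 := by
  refine natDegree_eq_of_le_of_coeff_ne_zero (natDegree_Phi_le a p) ?_
  rw [coeff_Phi_natDegree_succ]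
  have : (0 : ℝ) < p.natDegree + 2 * (1 + a) := by
    have := p.natDegree.cast_nonneg (α := ℝ)
    linarith
  exact mul_ne_zero this.ne' (leadingCoeff_ne_zero.2 hp)

theorem Phi_ne_zero {a : ℝ} (ha : -1 < a) {p : ℝ[X]} (hp : p ≠ 0) : Phi a p ≠ 0 :=
  ne_zero_of_natDegree_gt (n := 0) (by rw [natDegree_Phi ha hp]; omega)

theorem rootMultiplicity_le_rootMultiplicity_Phi_add_one {a : ℝ} {p : ℝ[X]} (hq : Phi a p ≠ 0)
    (x : ℝ) : ((X ^ 2 - 1) * p).rootMultiplicity x ≤ (Phi a p).rootMultiplicity x + 1 := by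
  have hp : p ≠ 0 := by rintro rfl; simp [Phi] at hq
  have hmul : ((X ^ 2 - 1) * p).rootMultiplicity x ≤ p.rootMultiplicity x + 1 := by
    rw [rootMultiplicity_mul (mul_ne_zero monic_X_sq_sub_one.ne_zero hp), add_comm]
    exact Nat.add_le_add_left (rootMultiplicity_X_sq_sub_one_le x) _
  suffices (X - C x) ^ (((X ^ 2 - 1) * p).rootMultiplicity x - 1) ∣ Phi a p by
    have := (le_rootMultiplicity_iff hq).2 this
    omega
  rw [Phi_eq_derivative_add]
  exact dvd_add (pow_sub_one_dvd_derivative_of_pow_dvd (pow_rootMultiplicity_dvd _ x))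
    (((pow_dvd_pow _ (by omega)).trans (p.pow_rootMultiplicity_dvd x)).mul_left _)

theorem hasDerivAt_abs_rpow_mul_eval (a : ℝ) (p : ℝ[X]) {x : ℝ} (hx : x ^ 2 - 1 ≠ 0) :
    HasDerivAt (fun y => |y ^ 2 - 1| ^ (1 + a) * p.eval y)
      (|x ^ 2 - 1| ^ (1 + a) / (x ^ 2 - 1) * (Phi a p).eval x) x := by
  have hu : HasDerivAt (fun y : ℝ => y ^ 2 - 1) (2 * x) x := by
    simpa using (hasDerivAt_pow 2 x).sub_const 1
  refine ((hu.abs_rpow_const hx (1 + a)).mul (p.hasDerivAt x)).congr_deriv ?_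
  simp only [Phi, eval_add, eval_mul, eval_sub, eval_pow, eval_X, eval_one, eval_C]
  field_simp
  ring

theorem card_roots_toFinset_le_card_roots_Phi_sdiff_succ {a : ℝ} (ha : -1 < a) (p : ℝ[X]) :
    ((X ^ 2 - 1) * p).roots.toFinset.card ≤
      ((Phi a p).roots.toFinset \ ((X ^ 2 - 1) * p).roots.toFinset).card + 1 := by
  rcases eq_or_ne p 0 with rfl | hp
  · simp
  have hP : (X ^ 2 - 1) * p ≠ 0 := mul_ne_zero monic_X_sq_sub_one.ne_zero hp
  have hq := Phi_ne_zero ha hp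
  set F : ℝ → ℝ := fun y => |y ^ 2 - 1| ^ (1 + a) * p.eval y
  have hF : ∀ x ∈ ((X ^ 2 - 1) * p).roots.toFinset, F x = 0 := by
    intro x hx
    rw [Multiset.mem_toFinset, mem_roots hP, IsRoot, eval_mul, mul_eq_zero] at hx
    rcases hx with hx | hx
    · simp only [eval_sub, eval_pow, eval_X, eval_one] at hx
      simp [F, hx, Real.zero_rpow (by linarith : 1 + a ≠ 0)]
    · simp [F, hx]
  refine Finset.card_le_sdiff_of_interleaved fun x hx y hy hxy hxy' => ?_
  have hsq : ∀ z ∈ Set.Ioo x y, z ^ 2 - 1 ≠ 0 := by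
    intro z hz h
    refine hxy' z ?_ hz
    simp [mem_roots hP, h]
  have hFc : Continuous F := by
    have : Continuous fun y : ℝ => |y ^ 2 - 1| := by fun_prop
    exact (this.rpow_const fun _ => Or.inr (by linarith)).mul p.continuous
  obtain ⟨c, hc, hFc'⟩ := exists_hasDerivAt_eq_zero hxy hFc.continuousOn
    ((hF x hx).trans (hF y hy).symm) fun z hz => hasDerivAt_abs_rpow_mul_eval a p (hsq z hz)
  refine ⟨c, ?_, hc⟩
  have hweight : |c ^ 2 - 1| ^ (1 + a) / (c ^ 2 - 1) ≠ 0 :=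
    div_ne_zero (Real.rpow_pos_of_pos (abs_pos.2 (hsq c hc)) _).ne' (hsq c hc)
  rw [Multiset.mem_toFinset, mem_roots hq]
  exact (mul_eq_zero.1 hFc').resolve_left hweight

theorem card_roots_add_one_le_card_roots_Phi {a : ℝ} (ha : -1 < a) {p : ℝ[X]} (hp : p ≠ 0) :
    Multiset.card p.roots + 1 ≤ Multiset.card (Phi a p).roots := by
  have hq := Phi_ne_zero ha hp
  have hP := Multiset.card_le_card_add_one_of_count_le_count_add_one
    (fun x => by
      simpa only [count_roots] using rootMultiplicity_le_rootMultiplicity_Phi_add_one hq x)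
    (card_roots_toFinset_le_card_roots_Phi_sdiff_succ ha p)
  rw [roots_mul (mul_ne_zero monic_X_sq_sub_one.ne_zero hp), roots_X_sq_sub_one] at hP
  simp only [Multiset.card_add, Multiset.insert_eq_cons, Multiset.card_cons,
    Multiset.card_singleton] at hP
  omega

theorem filter_im_eq_zero_roots_map (q : ℝ[X]) :
    (q.map (algebraMap ℝ ℂ)).roots.filter (fun z => z.im = 0) = q.roots.map (algebraMap ℝ ℂ) := by
  have hinj := (algebraMap ℝ ℂ).injective
  ext z
  by_cases hz : z.im = 0
  · obtain ⟨r, rfl⟩ : ∃ r : ℝ, algebraMap ℝ ℂ r = z := ⟨z.re, Complex.ext (by simp) (by simp [hz])⟩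
    rw [Multiset.count_filter_of_pos (p := fun z : ℂ => z.im = 0) hz, count_roots,
      ← eq_rootMultiplicity_map hinj, Multiset.count_map_eq_count' _ _ hinj, count_roots]
  · rw [Multiset.count_filter_of_neg (p := fun z : ℂ => z.im = 0) hz, eq_comm,
      Multiset.count_eq_zero, Multiset.mem_map]
    rintro ⟨r, -, rfl⟩
    simp at hz

theorem ZC_add_card_roots (q : ℝ[X]) : ZC q + Multiset.card q.roots = q.natDegree := by
  classical
  have hsplit := (IsAlgClosed.splits (q.map (algebraMap ℝ ℂ))).natDegree_eq_card_roots
  rw [natDegree_map] at hsplit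
  rw [hsplit, ← Multiset.card_map (algebraMap ℝ ℂ), ← filter_im_eq_zero_roots_map, ZC,
    ← Multiset.card_add, add_comm]
  convert congrArg Multiset.card (Multiset.filter_add_not (fun z : ℂ => z.im = 0) _)

theorem stmt11 (a : ℝ) (ha : -1 < a) (p : Polynomial ℝ) :
    ZC (Phi a p) ≤ ZC p := by
  rcases eq_or_ne p 0 with rfl | hp
  · simp [Phi]
  have hp' := ZC_add_card_roots p
  have hq' := ZC_add_card_roots (Phi a p)
  have hdeg := natDegree_Phi ha hp
  have hroots := card_roots_add_one_le_card_roots_Phi ha hp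
  omega
end

section
/- Let α ≥ 0 and q(x) = c₀ + c₁x + ⋯ + c_r x^r with r ≥ 1 and c_r ≠ 0. Suppose B = {b_k}_{k=0}^∞ is a simple set of real polynomials (deg b_k = k) satisfying γ_n b_n(x) = q(x) b_n^{(r)}(x) + α q'(x) b_n^{(r−1)}(x) for all n, where {γ_n} are real numbers. Then γ_n = c_r · n!·(n + (α−1)r + 1)/(n−r+1)! for all n ≥ r−1, and γ_n = 0 for n < r−1. -/
open Polynomial Finset

/-!
Comparing the coefficients of `x^n` on both sides of the differential equation: since
`deg q ≤ r` and `deg q' ≤ r - 1`, only the leading coefficients of `q`, `q'` and `b_n` contribute,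
giving `γ_n = c_r (n^{(r)} + α r n^{(r-1)})` with falling factorials `n^{(k)}`. For `n < r - 1`
both falling factorials vanish; otherwise they equal `n!/(n-r)!` and `n!/(n-r+1)!`.
-/

namespace Polynomial

variable {R : Type*}

theorem coeff_mul_iterate_derivative_of_natDegree_le [CommSemiring R] {p s : R[X]} {k n : ℕ}
    (hp : p.natDegree ≤ k) (hs : s.natDegree ≤ n) :
    (p * derivative^[k] s).coeff n = p.coeff k * ((n.descFactorial k : R) * s.coeff n) := by
  rcases le_or_gt k n with hkn | hnk
  · have hs' : (derivative^[k] s).natDegree ≤ n - k :=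
      (natDegree_iterate_derivative s k).trans (by omega)
    have h := coeff_mul_add_eq_of_natDegree_le hp hs'
    rw [Nat.add_sub_cancel' hkn] at h
    rw [h, coeff_iterate_derivative, Nat.sub_add_cancel hkn, nsmul_eq_mul]
  · rw [iterate_derivative_eq_zero (hs.trans_lt hnk), mul_zero, coeff_zero,
      Nat.descFactorial_eq_zero_iff_lt.2 hnk, Nat.cast_zero, zero_mul, mul_zero]

theorem eigenvalue_eq_of_C_mul_eq_iterate_derivative [CommRing R] [IsDomain R] {r n : ℕ}
    (hr : 1 ≤ r) {q b : R[X]} (hq : q.natDegree ≤ r) (hb : b.degree = n) {γ α : R}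
    (h : C γ * b = q * derivative^[r] b + C α * derivative q * derivative^[r - 1] b) :
    γ = q.coeff r * (n.descFactorial r + α * r * n.descFactorial (r - 1)) := by
  have hbn : b.natDegree = n := natDegree_eq_of_degree_eq_some hb
  have hlead : b.coeff n ≠ 0 := by
    rw [← hbn]
    exact leadingCoeff_ne_zero.2 (ne_zero_of_degree_gt (n := ⊥) (by simp [hb]))
  have hq' : (C α * derivative q).natDegree ≤ r - 1 :=
    (natDegree_C_mul_le _ _).trans ((natDegree_derivative_le q).trans (by omega))
  have hcoeff := congrArg (coeff · n) h
  simp only [coeff_add, coeff_C_mul] at hcoeff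
  rw [coeff_mul_iterate_derivative_of_natDegree_le hq hbn.le,
    coeff_mul_iterate_derivative_of_natDegree_le hq' hbn.le, coeff_C_mul, coeff_derivative,
    Nat.sub_add_cancel hr, ← Nat.cast_add_one, Nat.sub_add_cancel hr] at hcoeff
  refine mul_right_cancel₀ hlead ?_
  linear_combination hcoeff

end Polynomial

theorem descFactorial_succ_add_mul_descFactorial {K : Type*} [Field K] [CharZero K] {n s : ℕ}
    (hs : s ≤ n) (α : K) :
    (n.descFactorial (s + 1) : K) + α * (s + 1 : ℕ) * n.descFactorial s
      = n.factorial * (n + (α - 1) * (s + 1 : ℕ) + 1) / (n - s).factorial := by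
  have hfac : ((n - s).factorial : K) * n.descFactorial s = n.factorial := by
    exact_mod_cast Nat.factorial_mul_descFactorial hs
  have hfac0 : ((n - s).factorial : K) ≠ 0 := Nat.cast_ne_zero.2 (Nat.factorial_ne_zero _)
  rw [Nat.descFactorial_succ, eq_div_iff hfac0, ← hfac]
  push_cast [Nat.cast_sub hs]
  ring

theorem stmt17_general (α : ℝ) (r : ℕ) (hr : 1 ≤ r)
    (q : Polynomial ℝ) (hq : q.degree = r)
    (b : ℕ → Polynomial ℝ) (hdeg : ∀ n, (b n).degree = n)
    (γ : ℕ → ℝ)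
    (hde : ∀ n, C (γ n) * b n
        = q * derivative^[r] (b n) + C α * derivative q * derivative^[r - 1] (b n)) :
    (∀ n, r - 1 ≤ n →
        γ n = q.coeff r * ((n.factorial : ℝ) * ((n : ℝ) + (α - 1) * r + 1)
                / ((n + 1 - r).factorial : ℝ)))
    ∧ (∀ n, n < r - 1 → γ n = 0) := by
  have hγ n := eigenvalue_eq_of_C_mul_eq_iterate_derivative hr
    (natDegree_eq_of_degree_eq_some hq).le (hdeg n) (hde n)
  obtain ⟨s, rfl⟩ := Nat.exists_eq_add_of_le' hr
  simp only [Nat.add_sub_cancel] at hγ ⊢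
  refine ⟨fun n hn => ?_, fun n hn => ?_⟩
  · rw [hγ, Nat.add_sub_add_right, descFactorial_succ_add_mul_descFactorial hn]
  · rw [hγ, Nat.descFactorial_eq_zero_iff_lt.2 (by omega : n < s + 1),
      Nat.descFactorial_eq_zero_iff_lt.2 hn]
    simp

theorem stmt17 (α : ℝ) (hα : 0 ≤ α) (r : ℕ) (hr : 1 ≤ r)
    (q : Polynomial ℝ) (hq : q.degree = r)
    (b : ℕ → Polynomial ℝ) (hdeg : ∀ n, (b n).degree = n)
    (γ : ℕ → ℝ)
    (hde : ∀ n, C (γ n) * b n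
        = q * derivative^[r] (b n) + C α * derivative q * derivative^[r - 1] (b n)) :
    (∀ n, r - 1 ≤ n →
        γ n = q.coeff r * ((n.factorial : ℝ) * ((n : ℝ) + (α - 1) * r + 1)
                / ((n + 1 - r).factorial : ℝ)))
    ∧ (∀ n, n < r - 1 → γ n = 0) :=
  stmt17_general α r hr q hq b hdeg γ hde
end
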